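/- arXiv:1911.12779 — 4 statements merged into one kernel-verified Lean document; each statement's English description precedes it below -/
import Mathlib

section
/- Let (Ω, 𝔉, P) be a probability space, 𝒢 ⊆ 𝔉 a sub-σ-algebra, and τ a real random variable whose regular conditional cdf F(u, ω) = P(τ ≤ u | 𝒢)(ω) is continuous in u for P-almost every ω. Then, almost surely, P(F(τ) ≤ q | 𝒢) = q for every q ∈ (0,1); in particular F(τ) is uniformly distributed on (0,1) and independent of 𝒢. -/
open Filter MeasureTheory Set ProbabilityTheory


section RealAux
variable {f : ℝ → ℝ} {q : ℝ}

private lemma raux_nonneg (hm : Monotone f) (hb : Tendsto f atBot (nhds 0)) (u : ℝ) :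
    0 ≤ f u :=
  le_of_tendsto hb (eventually_atBot.2 ⟨u, fun v hv => hm hv⟩)

private lemma raux_le_one (hm : Monotone f) (ht : Tendsto f atTop (nhds 1)) (u : ℝ) :
    f u ≤ 1 :=
  ge_of_tendsto ht (eventually_atTop.2 ⟨u, fun v hv => hm hv⟩)

private lemma raux_iff (hm : Monotone f) (hc : Continuous f)
    (hb : Tendsto f atBot (nhds 0)) (ht : Tendsto f atTop (nhds 1))
    (hq0 : 0 < q) (hq1 : q < 1) :
    (∀ u, f u ≤ q ↔ u ≤ sSup {v | f v ≤ q}) ∧ f (sSup {v | f v ≤ q}) = q := by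
  have hne : {v | f v ≤ q}.Nonempty := by
    obtain ⟨u, hu⟩ := (hb.eventually_lt_const hq0).exists
    exact ⟨u, hu.le⟩
  have hbdd : BddAbove {v | f v ≤ q} := by
    obtain ⟨M, hM⟩ := eventually_atTop.1 (ht.eventually_const_lt hq1)
    refine ⟨M, fun u hu => ?_⟩
    by_contra h
    push_neg at h
    exact absurd hu (not_le.2 (hM u h.le))
  have hclosed : IsClosed {v | f v ≤ q} := isClosed_le hc continuous_const
  have hmem : sSup {v | f v ≤ q} ∈ {v | f v ≤ q} :=
    hclosed.closure_subset (csSup_mem_closure hne hbdd)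
  have hiff : ∀ u, f u ≤ q ↔ u ≤ sSup {v | f v ≤ q} :=
    fun u => ⟨fun h => le_csSup hbdd h, fun h => le_trans (hm h) hmem⟩
  refine ⟨hiff, le_antisymm hmem ?_⟩
  have h1 : Tendsto (fun m : ℕ => sSup {v | f v ≤ q} + 1 / ((m : ℝ) + 1)) atTop
      (nhds (sSup {v | f v ≤ q} + 0)) :=
    tendsto_const_nhds.add tendsto_one_div_add_atTop_nhds_zero_nat
  rw [add_zero] at h1
  have h2 := (hc.tendsto _).comp h1
  refine ge_of_tendsto h2 (Eventually.of_forall fun m => ?_)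
  have h3 : ¬ (sSup {v | f v ≤ q} + 1 / ((m : ℝ) + 1) ≤ sSup {v | f v ≤ q}) := by
    have : (0:ℝ) < 1 / ((m:ℝ) + 1) := by positivity
    linarith
  exact (not_le.1 fun hc' => h3 ((hiff _).1 hc')).le

private lemma raux_grid (x : ℝ) (c : ℝ) :
    Tendsto (fun n : ℕ => ((⌊(2:ℝ)^n * x⌋ : ℝ) + c) / 2^n) atTop (nhds x) := by
  have h2 : ∀ n : ℕ, (0:ℝ) < 2^n := fun n => by positivity
  have hpow : Tendsto (fun n : ℕ => ((2:ℝ)⁻¹)^n) atTop (nhds 0) :=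
    tendsto_pow_atTop_nhds_zero_of_lt_one (by norm_num) (by norm_num)
  have hl : Tendsto (fun n : ℕ => x + (c - 1) * ((2:ℝ)⁻¹)^n) atTop (nhds x) := by
    simpa using (hpow.const_mul (c - 1)).const_add x
  have hr : Tendsto (fun n : ℕ => x + c * ((2:ℝ)⁻¹)^n) atTop (nhds x) := by
    simpa using (hpow.const_mul c).const_add x
  refine tendsto_of_tendsto_of_tendsto_of_le_of_le hl hr (fun n => ?_) (fun n => ?_)
  · rw [le_div_iff₀ (h2 n)]
    have hfl := Int.sub_one_lt_floor ((2:ℝ)^n * x)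
    have hinv : ((2:ℝ)⁻¹)^n * (2:ℝ)^n = 1 := by
      rw [← mul_pow]; norm_num
    have hexp : (x + (c - 1) * ((2:ℝ)⁻¹)^n) * 2^n
        = x * 2^n + (c - 1) * (((2:ℝ)⁻¹)^n * 2^n) := by ring
    rw [hexp, hinv]
    have : (2:ℝ)^n * x = x * 2^n := by ring
    linarith [hfl, this]
  · rw [div_le_iff₀ (h2 n)]
    have hfl := Int.floor_le ((2:ℝ)^n * x)
    have hinv : ((2:ℝ)⁻¹)^n * (2:ℝ)^n = 1 := by
      rw [← mul_pow]; norm_num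
    have hexp : (x + c * ((2:ℝ)⁻¹)^n) * 2^n
        = x * 2^n + c * (((2:ℝ)⁻¹)^n * 2^n) := by ring
    rw [hexp, hinv]
    have : (2:ℝ)^n * x = x * 2^n := by ring
    linarith [hfl, this]

end RealAux

section SetAux
open Filter MeasureTheory Set
variable {Ω : Type*}

private def Bs (g : ℚ → Ω → ℝ) (q : ℝ) (n : ℕ) (k : ℤ) : Set Ω :=
  {ω | ∃ j : ℤ, j ≤ k ∧ q < g ((j : ℚ) / 2 ^ n) ω}

private def Ss (g : ℚ → Ω → ℝ) (q : ℝ) (n : ℕ) (k : ℤ) : Set Ω :=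
  Bs g q n k \ Bs g q n (k - 1)

private lemma Bs_mono {g : ℚ → Ω → ℝ} {q : ℝ} {n : ℕ} {j k : ℤ} (h : j ≤ k) :
    Bs g q n j ⊆ Bs g q n k := fun ω ⟨i, hi, hq⟩ => ⟨i, hi.trans h, hq⟩

private lemma Ss_disj {g : ℚ → Ω → ℝ} {q : ℝ} {n : ℕ} : Pairwise (Function.onFun Disjoint (Ss g q n)) := by
  have hlt : ∀ j k : ℤ, j < k → Disjoint (Ss g q n j) (Ss g q n k) := by
    intro j k hjk
    rw [Set.disjoint_left]
    intro ω hj hk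
    exact hk.2 (Bs_mono (by omega) hj.1)
  intro j k hjk
  rcases lt_or_gt_of_ne hjk with h | h
  · exact hlt j k h
  · exact (hlt k j h).symm

private lemma measurableSet_Bs {m : MeasurableSpace Ω} {g : ℚ → Ω → ℝ} {q : ℝ}
    (hg : ∀ r : ℚ, Measurable[m] (g r)) (n : ℕ) (k : ℤ) : MeasurableSet[m] (Bs g q n k) := by
  have : Bs g q n k = ⋃ (j : ℤ) (_ : j ≤ k), {ω | q < g ((j : ℚ) / 2 ^ n) ω} := by
    ext ω; simp [Bs]
  rw [this]
  exact MeasurableSet.iUnion fun j => MeasurableSet.iUnion fun _ =>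
    measurableSet_lt measurable_const (hg _)

private lemma measurableSet_Ss {m : MeasurableSpace Ω} {g : ℚ → Ω → ℝ} {q : ℝ}
    (hg : ∀ r : ℚ, Measurable[m] (g r)) (n : ℕ) (k : ℤ) : MeasurableSet[m] (Ss g q n k) :=
  (measurableSet_Bs hg n k).diff (measurableSet_Bs hg n (k - 1))

private lemma mem_Bs_iff {g : ℚ → Ω → ℝ} {q : ℝ} {ω : Ω} {f : ℝ → ℝ}
    (hfg : ∀ r : ℚ, f r = g r ω) (hm : Monotone f) (n : ℕ) (k : ℤ) :
    ω ∈ Bs g q n k ↔ q < f ((k : ℝ) / 2 ^ n) := by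
  have hcast : ∀ j : ℤ, (((j : ℚ) / 2 ^ n : ℚ) : ℝ) = (j : ℝ) / 2 ^ n := fun j => by
    push_cast; ring
  constructor
  · rintro ⟨j, hj, h⟩
    rw [← hfg, hcast] at h
    refine h.trans_le (hm ?_)
    gcongr
  · intro h
    refine ⟨k, le_rfl, ?_⟩
    rw [← hfg, hcast]
    exact h

private lemma mem_Ss_iff {g : ℚ → Ω → ℝ} {q : ℝ} {ω : Ω} {f : ℝ → ℝ}
    (hfg : ∀ r : ℚ, f r = g r ω) (hm : Monotone f) (n : ℕ) (k : ℤ) :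
    ω ∈ Ss g q n k ↔ (q < f ((k : ℝ) / 2 ^ n) ∧ f (((k : ℝ) - 1) / 2 ^ n) ≤ q) := by
  have h1 := mem_Bs_iff (q := q) hfg hm n k
  have h2 := mem_Bs_iff (q := q) hfg hm n (k - 1)
  have hcast : ((k - 1 : ℤ) : ℝ) = (k : ℝ) - 1 := by push_cast; ring
  rw [hcast] at h2
  constructor
  · rintro ⟨hB, hB'⟩
    exact ⟨h1.1 hB, not_lt.1 fun h => hB' (h2.2 h)⟩
  · rintro ⟨h6, h7⟩
    exact ⟨h1.2 h6, fun hB' => absurd (h2.1 hB') (not_lt.2 h7)⟩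

end SetAux

private theorem key {Ω : Type*} (𝒢 : MeasurableSpace Ω) {mΩ : MeasurableSpace Ω}
    (μ : Measure Ω) [IsProbabilityMeasure μ] (h𝒢 : 𝒢 ≤ mΩ)
    (τ : Ω → ℝ) (hτ : Measurable[mΩ] τ)
    (F : ℝ → Ω → ℝ)
    (hFmeas : Measurable[MeasurableSpace.prod inferInstance mΩ] fun p : ℝ × Ω => F p.1 p.2)
    (hFcond : ∀ u : ℝ,
      F u =ᵐ[μ] μ[Set.indicator {ω | τ ω ≤ u} (fun _ => (1 : ℝ)) | 𝒢])
    (hFmono : ∀ᵐ ω ∂μ, Monotone fun u => F u ω)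
    (hFcont : ∀ᵐ ω ∂μ, Continuous fun u => F u ω)
    (hFbot : ∀ᵐ ω ∂μ, Tendsto (fun u => F u ω) atBot (nhds 0))
    (hFtop : ∀ᵐ ω ∂μ, Tendsto (fun u => F u ω) atTop (nhds 1))
    (g : ℚ → Ω → ℝ) (hgmeas : ∀ r : ℚ, Measurable[𝒢] (g r))
    (hgF : ∀ r : ℚ, F (r : ℝ) =ᵐ[μ] g r)
    {q : ℝ} (hq0 : 0 < q) (hq1 : q < 1) {G : Set Ω} (hG : MeasurableSet[𝒢] G) :
    μ (G ∩ {ω | F (τ ω) ω ≤ q}) = ENNReal.ofReal q * μ G := by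
  classical
  -- measurability facts
  have hXmeas : Measurable[mΩ] fun ω => F (τ ω) ω := hFmeas.comp (hτ.prodMk measurable_id)
  have hAmeas : MeasurableSet[mΩ] {ω | F (τ ω) ω ≤ q} := measurableSet_le hXmeas measurable_const
  have hSmeas : ∀ n k, MeasurableSet[𝒢] (Ss g q n k) := fun n k => measurableSet_Ss hgmeas n k
  have hGS : ∀ n k, MeasurableSet[mΩ] (G ∩ Ss g q n k) := fun n k =>
    h𝒢 _ (hG.inter (hSmeas n k))
  have hmeasF : ∀ u : ℝ, Measurable[mΩ] (F u) := fun u =>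
    (hFmeas.comp (measurable_const.prodMk measurable_id))
  -- the good set
  have hgood : ∀ᵐ ω ∂μ, (Monotone fun u => F u ω) ∧ (Continuous fun u => F u ω) ∧
      Tendsto (fun u => F u ω) atBot (nhds 0) ∧ Tendsto (fun u => F u ω) atTop (nhds 1) ∧
      ∀ r : ℚ, F (r : ℝ) ω = g r ω := by
    filter_upwards [hFmono, hFcont, hFbot, hFtop, ae_all_iff.2 hgF] with ω h1 h2 h3 h4 h5
    exact ⟨h1, h2, h3, h4, h5⟩
  -- per-ω structure facts
  have hω : ∀ ω, (Monotone fun u => F u ω) → (Continuous fun u => F u ω) →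
      Tendsto (fun u => F u ω) atBot (nhds 0) → Tendsto (fun u => F u ω) atTop (nhds 1) →
      (∀ r : ℚ, F (r : ℝ) ω = g r ω) →
      ∃ w : ℝ, (∀ u, F u ω ≤ q ↔ u ≤ w) ∧ F w ω = q ∧
        (∀ n k, ω ∈ Ss g q n k ↔ (q < F ((k : ℝ) / 2 ^ n) ω ∧ F (((k : ℝ) - 1) / 2 ^ n) ω ≤ q)) ∧
        (∀ n, ω ∈ Ss g q n (⌊(2:ℝ) ^ n * w⌋ + 1)) := by
    intro ω h1 h2 h3 h4 h5
    obtain ⟨hiff, hWq⟩ := raux_iff h1 h2 h3 h4 hq0 hq1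
    refine ⟨_, hiff, hWq, mem_Ss_iff h5 h1, fun n => ?_⟩
    set w := sSup {v | F v ω ≤ q} with hw
    have h2n : (0:ℝ) < 2 ^ n := by positivity
    rw [mem_Ss_iff h5 h1]
    constructor
    · refine not_le.1 fun hle => ?_
      have hlt : w < ((⌊(2:ℝ) ^ n * w⌋ + 1 : ℤ) : ℝ) / 2 ^ n := by
        rw [lt_div_iff₀ h2n]
        push_cast
        have := Int.lt_floor_add_one ((2:ℝ) ^ n * w)
        nlinarith [this]
      exact absurd ((hiff _).1 hle) (not_le.2 hlt)
    · refine (hiff _).2 ?_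
      have heq : (((⌊(2:ℝ) ^ n * w⌋ + 1 : ℤ) : ℝ) - 1) / 2 ^ n
          = ((⌊(2:ℝ) ^ n * w⌋ : ℝ)) / 2 ^ n := by push_cast; ring
      rw [heq, div_le_iff₀ h2n]
      have := Int.floor_le ((2:ℝ) ^ n * w)
      nlinarith [this]
  -- conditional expectation step
  have hcond : ∀ (P : Set Ω), MeasurableSet[𝒢] P → ∀ u : ℝ,
      μ (P ∩ {ω | τ ω ≤ u}) = ∫⁻ ω in P, ENNReal.ofReal (F u ω) ∂μ := by
    intro P hP u
    have hPm : MeasurableSet[mΩ] P := h𝒢 _ hP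
    have htm : MeasurableSet[mΩ] {ω | τ ω ≤ u} :=
      measurableSet_le hτ measurable_const
    have hint : Integrable (Set.indicator {ω | τ ω ≤ u} (fun _ => (1:ℝ))) μ :=
      (integrable_const 1).indicator htm
    have hFint : Integrable (F u) μ := integrable_condExp.congr (hFcond u).symm
    have heq1 : ∫ ω in P, Set.indicator {ω | τ ω ≤ u} (fun _ => (1:ℝ)) ω ∂μ
        = (μ (P ∩ {ω | τ ω ≤ u})).toReal := by
      rw [setIntegral_indicator htm, setIntegral_const]
      simp
      rfl
    have heq2 : ∫ ω in P, F u ω ∂μ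
        = ∫ ω in P, Set.indicator {ω | τ ω ≤ u} (fun _ => (1:ℝ)) ω ∂μ := by
      rw [integral_congr_ae (ae_restrict_of_ae (hFcond u))]
      exact setIntegral_condExp h𝒢 hint hP
    have hnn : 0 ≤ᵐ[μ] F u := by
      filter_upwards [hgood] with ω h
      exact raux_nonneg h.1 h.2.2.1 u
    calc μ (P ∩ {ω | τ ω ≤ u})
        = ENNReal.ofReal ((μ (P ∩ {ω | τ ω ≤ u})).toReal) :=
          (ENNReal.ofReal_toReal (measure_ne_top μ _)).symm
      _ = ENNReal.ofReal (∫ ω in P, F u ω ∂μ) := by rw [heq2, heq1]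
      _ = ∫⁻ ω in P, ENNReal.ofReal (F u ω) ∂μ :=
          ofReal_integral_eq_lintegral_ofReal hFint.restrict (ae_restrict_of_ae hnn)
  -- series identity
  have hser : ∀ (v : ℕ → ℤ → ℝ) (n : ℕ),
      ∑' k : ℤ, μ (G ∩ Ss g q n k ∩ {ω | τ ω ≤ v n k})
        = ∫⁻ ω, ∑' k : ℤ, (G ∩ Ss g q n k).indicator
            (fun ω' => ENNReal.ofReal (F (v n k) ω')) ω ∂μ := by
    intro v n
    rw [lintegral_tsum fun k =>
      (((hmeasF (v n k)).ennreal_ofReal).indicator (hGS n k)).aemeasurable]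
    refine tsum_congr fun k => ?_
    rw [hcond _ (hG.inter (hSmeas n k)) (v n k), lintegral_indicator (hGS n k)]
  -- dominated convergence
  have hDCT : ∀ v : ℕ → ℤ → ℝ,
      (∀ (ω : Ω) (w : ℝ), (Continuous fun u => F u ω) → F w ω = q →
        Tendsto (fun n => F (v n (⌊(2:ℝ) ^ n * w⌋ + 1)) ω) atTop (nhds q)) →
      Tendsto (fun n => ∫⁻ ω, ∑' k : ℤ, (G ∩ Ss g q n k).indicator
          (fun ω' => ENNReal.ofReal (F (v n k) ω')) ω ∂μ) atTop
        (nhds (ENNReal.ofReal q * μ G)) := by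
    intro v hv
    have hφmeas : ∀ n, Measurable[mΩ] fun ω => ∑' k : ℤ, (G ∩ Ss g q n k).indicator
        (fun ω' => ENNReal.ofReal (F (v n k) ω')) ω :=
      fun n => Measurable.ennreal_tsum fun k =>
        ((hmeasF (v n k)).ennreal_ofReal).indicator (hGS n k)
    have hbound : ∀ n, (fun ω => ∑' k : ℤ, (G ∩ Ss g q n k).indicator
        (fun ω' => ENNReal.ofReal (F (v n k) ω')) ω) ≤ᵐ[μ] fun _ => (1 : ENNReal) := by
      intro n
      filter_upwards [hgood] with ω h
      obtain ⟨h1, h2, h3, h4, h5⟩ := h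
      obtain ⟨w, hiff, hWq, hchar, hkap⟩ := hω ω h1 h2 h3 h4 h5
      by_cases hωG : ω ∈ G
      · have hmem : ω ∈ G ∩ Ss g q n (⌊(2:ℝ) ^ n * w⌋ + 1) := ⟨hωG, hkap n⟩
        have hothers : ∀ k : ℤ, k ≠ ⌊(2:ℝ) ^ n * w⌋ + 1 → (G ∩ Ss g q n k).indicator
            (fun ω' => ENNReal.ofReal (F (v n k) ω')) ω = 0 := fun k hk =>
          Set.indicator_of_notMem
            (fun hmem' => Set.disjoint_left.1 (Ss_disj hk) hmem'.2 (hkap n)) _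
        rw [tsum_eq_single (⌊(2:ℝ) ^ n * w⌋ + 1) hothers, Set.indicator_of_mem hmem]
        exact ENNReal.ofReal_le_one.2 (raux_le_one h1 h4 _)
      · have hz : ∀ k : ℤ, (G ∩ Ss g q n k).indicator
            (fun ω' => ENNReal.ofReal (F (v n k) ω')) ω = 0 :=
          fun k => Set.indicator_of_notMem (fun hmem => hωG hmem.1) _
        rw [tsum_congr hz, tsum_zero]
        exact zero_le
    have hlim : ∀ᵐ ω ∂μ, Tendsto (fun n => ∑' k : ℤ, (G ∩ Ss g q n k).indicator
        (fun ω' => ENNReal.ofReal (F (v n k) ω')) ω) atTop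
        (nhds (G.indicator (fun _ => ENNReal.ofReal q) ω)) := by
      filter_upwards [hgood] with ω h
      obtain ⟨h1, h2, h3, h4, h5⟩ := h
      obtain ⟨w, hiff, hWq, hchar, hkap⟩ := hω ω h1 h2 h3 h4 h5
      by_cases hωG : ω ∈ G
      · have heval : ∀ n, (∑' k : ℤ, (G ∩ Ss g q n k).indicator
            (fun ω' => ENNReal.ofReal (F (v n k) ω')) ω)
            = ENNReal.ofReal (F (v n (⌊(2:ℝ) ^ n * w⌋ + 1)) ω) := by
          intro n
          have hmem : ω ∈ G ∩ Ss g q n (⌊(2:ℝ) ^ n * w⌋ + 1) := ⟨hωG, hkap n⟩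
          have hothers : ∀ k : ℤ, k ≠ ⌊(2:ℝ) ^ n * w⌋ + 1 → (G ∩ Ss g q n k).indicator
              (fun ω' => ENNReal.ofReal (F (v n k) ω')) ω = 0 := fun k hk =>
            Set.indicator_of_notMem
              (fun hmem' => Set.disjoint_left.1 (Ss_disj hk) hmem'.2 (hkap n)) _
          rw [tsum_eq_single (⌊(2:ℝ) ^ n * w⌋ + 1) hothers, Set.indicator_of_mem hmem]
        rw [Set.indicator_of_mem hωG]
        refine Tendsto.congr (fun n => (heval n).symm) ?_
        exact (ENNReal.continuous_ofReal.tendsto q).comp (hv ω w h2 hWq)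
      · have hz : ∀ n, (∑' k : ℤ, (G ∩ Ss g q n k).indicator
            (fun ω' => ENNReal.ofReal (F (v n k) ω')) ω) = 0 := by
          intro n
          have hz' : ∀ k : ℤ, (G ∩ Ss g q n k).indicator
              (fun ω' => ENNReal.ofReal (F (v n k) ω')) ω = 0 :=
            fun k => Set.indicator_of_notMem (fun hmem => hωG hmem.1) _
          rw [tsum_congr hz', tsum_zero]
        rw [Set.indicator_of_notMem hωG]
        exact Tendsto.congr (fun n => (hz n).symm) tendsto_const_nhds
    have hmain := tendsto_lintegral_of_dominated_convergence (fun _ => (1 : ENNReal))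
      hφmeas hbound (by simp) hlim
    rwa [lintegral_indicator (h𝒢 _ hG), setLIntegral_const] at hmain
  -- pointwise limits of the grid values
  have hv1 : ∀ (ω : Ω) (w : ℝ), (Continuous fun u => F u ω) → F w ω = q →
      Tendsto (fun n : ℕ => F (((⌊(2:ℝ) ^ n * w⌋ + 1 : ℤ) : ℝ) / 2 ^ n) ω) atTop (nhds q) := by
    intro ω w hc hwq
    have h := (hc.tendsto w).comp (raux_grid w 1)
    rw [hwq] at h
    refine h.congr fun n => ?_
    simp only [Function.comp_apply]
    congr 1
    push_cast
    ring
  have hv2 : ∀ (ω : Ω) (w : ℝ), (Continuous fun u => F u ω) → F w ω = q →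
      Tendsto (fun n : ℕ => F ((((⌊(2:ℝ) ^ n * w⌋ + 1 : ℤ) : ℝ) - 1) / 2 ^ n) ω) atTop
        (nhds q) := by
    intro ω w hc hwq
    have h := (hc.tendsto w).comp (raux_grid w 0)
    rw [hwq] at h
    refine h.congr fun n => ?_
    simp only [Function.comp_apply]
    congr 1
    push_cast
    ring
  -- limits of the two series
  have hup' : Tendsto (fun n : ℕ => ∑' k : ℤ, μ (G ∩ Ss g q n k ∩ {ω | τ ω ≤ (k : ℝ) / 2 ^ n}))
      atTop (nhds (ENNReal.ofReal q * μ G)) := by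
    have h := hDCT (fun n k => (k : ℝ) / 2 ^ n) (fun ω w hc hwq => hv1 ω w hc hwq)
    exact Tendsto.congr (fun n => (hser (fun n k => (k : ℝ) / 2 ^ n) n).symm) h
  have hlow' : Tendsto (fun n : ℕ =>
      ∑' k : ℤ, μ (G ∩ Ss g q n k ∩ {ω | τ ω ≤ ((k : ℝ) - 1) / 2 ^ n}))
      atTop (nhds (ENNReal.ofReal q * μ G)) := by
    have h := hDCT (fun n k => ((k : ℝ) - 1) / 2 ^ n) (fun ω w hc hwq => hv2 ω w hc hwq)
    exact Tendsto.congr (fun n => (hser (fun n k => ((k : ℝ) - 1) / 2 ^ n) n).symm) h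
  -- partition of the event
  have hsum : ∀ n : ℕ, μ (G ∩ {ω | F (τ ω) ω ≤ q})
      = ∑' k : ℤ, μ (G ∩ Ss g q n k ∩ {ω | F (τ ω) ω ≤ q}) := by
    intro n
    have hdisj : Pairwise (Function.onFun Disjoint fun k : ℤ => G ∩ Ss g q n k ∩ {ω | F (τ ω) ω ≤ q}) :=
      fun j k hjk => (Ss_disj hjk).mono (fun ω h => h.1.2) (fun ω h => h.1.2)
    have hm : ∀ k : ℤ, MeasurableSet[mΩ] (G ∩ Ss g q n k ∩ {ω | F (τ ω) ω ≤ q}) :=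
      fun k => (hGS n k).inter hAmeas
    rw [← measure_iUnion hdisj hm]
    apply le_antisymm
    · refine measure_mono_ae ?_
      filter_upwards [hgood] with ω h hGA
      obtain ⟨h1, h2, h3, h4, h5⟩ := h
      obtain ⟨w, hiff, hWq, hchar, hkap⟩ := hω ω h1 h2 h3 h4 h5
      exact Set.mem_iUnion.2 ⟨⌊(2:ℝ) ^ n * w⌋ + 1, ⟨⟨hGA.1, hkap n⟩, hGA.2⟩⟩
    · exact measure_mono (Set.iUnion_subset fun k ω h => ⟨h.1.1, h.2⟩)
  -- sandwich bounds
  have hub : ∀ n : ℕ, μ (G ∩ {ω | F (τ ω) ω ≤ q})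
      ≤ ∑' k : ℤ, μ (G ∩ Ss g q n k ∩ {ω | τ ω ≤ (k : ℝ) / 2 ^ n}) := by
    intro n
    rw [hsum n]
    refine ENNReal.tsum_le_tsum fun k => measure_mono_ae ?_
    filter_upwards [hgood] with ω h hmem
    obtain ⟨h1, h2, h3, h4, h5⟩ := h
    obtain ⟨w, hiff, hWq, hchar, hkap⟩ := hω ω h1 h2 h3 h4 h5
    have h6 : q < F ((k : ℝ) / 2 ^ n) ω := ((hchar n k).1 hmem.1.2).1
    have hτw : τ ω ≤ w := (hiff (τ ω)).1 hmem.2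
    have hwk : w < (k : ℝ) / 2 ^ n := not_le.1 fun hc' => h6.not_ge ((hiff _).2 hc')
    exact ⟨hmem.1, le_of_lt (lt_of_le_of_lt hτw hwk)⟩
  have hlb : ∀ n : ℕ, ∑' k : ℤ, μ (G ∩ Ss g q n k ∩ {ω | τ ω ≤ ((k : ℝ) - 1) / 2 ^ n})
      ≤ μ (G ∩ {ω | F (τ ω) ω ≤ q}) := by
    intro n
    rw [hsum n]
    refine ENNReal.tsum_le_tsum fun k => measure_mono_ae ?_
    filter_upwards [hgood] with ω h hmem
    obtain ⟨h1, h2, h3, h4, h5⟩ := h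
    obtain ⟨w, hiff, hWq, hchar, hkap⟩ := hω ω h1 h2 h3 h4 h5
    have h7 : F (((k : ℝ) - 1) / 2 ^ n) ω ≤ q := ((hchar n k).1 hmem.1.2).2
    exact ⟨hmem.1, le_trans (h1 hmem.2) h7⟩
  exact le_antisymm (ge_of_tendsto' hup' hub) (le_of_tendsto' hlow' hlb)

/-- If `F (·, ω)` is a regular conditional cdf of `τ` given a sub-σ-algebra `𝒢`, with
a.s. continuous sample paths, then a.s. `P(F(τ) ≤ q | 𝒢) = q` for every `q ∈ (0,1)`;
in particular `F(τ)` is uniformly distributed on `(0,1)` and independent of `𝒢`. -/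
theorem stmt_3 {Ω : Type*} (𝒢 : MeasurableSpace Ω) {mΩ : MeasurableSpace Ω} (μ : Measure Ω) [IsProbabilityMeasure μ]
    (h𝒢 : 𝒢 ≤ mΩ)
    (τ : Ω → ℝ) (hτ : Measurable τ)
    (F : ℝ → Ω → ℝ) (hFmeas : Measurable fun p : ℝ × Ω => F p.1 p.2)
    (hFcond : ∀ u : ℝ,
      F u =ᵐ[μ] μ[Set.indicator {ω | τ ω ≤ u} (fun _ => (1 : ℝ)) | 𝒢])
    (hFmono : ∀ᵐ ω ∂μ, Monotone fun u => F u ω)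
    (hFcont : ∀ᵐ ω ∂μ, Continuous fun u => F u ω)
    (hFbot : ∀ᵐ ω ∂μ, Tendsto (fun u => F u ω) atBot (nhds 0))
    (hFtop : ∀ᵐ ω ∂μ, Tendsto (fun u => F u ω) atTop (nhds 1)) :
    (∀ q ∈ Set.Ioo (0 : ℝ) 1,
        μ[Set.indicator {ω | F (τ ω) ω ≤ q} (fun _ => (1 : ℝ)) | 𝒢]
          =ᵐ[μ] fun _ => q) ∧
    (∀ q ∈ Set.Ioo (0 : ℝ) 1, (μ {ω | F (τ ω) ω ≤ q}).toReal = q) ∧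
    Indep (MeasurableSpace.comap (fun ω => F (τ ω) ω) inferInstance) 𝒢 μ := by
  letI : MeasurableSpace Ω := mΩ
  have key' : ∀ q : ℝ, 0 < q → q < 1 → ∀ G : Set Ω, MeasurableSet[𝒢] G →
      μ (G ∩ {ω | F (τ ω) ω ≤ q}) = ENNReal.ofReal q * μ G := fun q hq0 hq1 G hG =>
    key 𝒢 μ h𝒢 τ hτ F hFmeas hFcond hFmono hFcont hFbot hFtop
      (fun r => μ[Set.indicator {ω | τ ω ≤ (r : ℝ)} (fun _ => (1 : ℝ)) | 𝒢])
      (fun _ => stronglyMeasurable_condExp.measurable)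
      (fun r => hFcond (r : ℝ)) hq0 hq1 hG
  have part2' : ∀ q : ℝ, 0 < q → q < 1 → μ {ω | F (τ ω) ω ≤ q} = ENNReal.ofReal q := by
    intro q hq0 hq1
    have h := key' q hq0 hq1 Set.univ MeasurableSet.univ
    rwa [Set.univ_inter, measure_univ, mul_one] at h
  have hXmeas : Measurable[mΩ] fun ω => F (τ ω) ω := hFmeas.comp (hτ.prodMk measurable_id)
  have hXm : Measurable[mΩ] fun ω => F (τ ω) ω := hXmeas
  have hseq : Tendsto (fun m : ℕ => 1 / ((m : ℝ) + 2)) atTop (nhds 0) := by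
    refine tendsto_of_tendsto_of_tendsto_of_le_of_le tendsto_const_nhds
      tendsto_one_div_add_atTop_nhds_zero_nat (fun m => by positivity) (fun m => ?_)
    have h0 : (0:ℝ) ≤ (m:ℝ) := Nat.cast_nonneg m
    exact one_div_le_one_div_of_le (by linarith) (by linarith)
  refine ⟨?_, ?_, ?_⟩
  · -- conditional expectation is q
    intro q hq
    have hA : MeasurableSet[mΩ] {ω | F (τ ω) ω ≤ q} := measurableSet_le hXm measurable_const
    have hint : Integrable (Set.indicator {ω | F (τ ω) ω ≤ q} fun _ => (1:ℝ)) μ :=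
      (integrable_const 1).indicator hA
    refine (ae_eq_condExp_of_forall_setIntegral_eq h𝒢 hint
      (fun s _ _ => (integrable_const q).integrableOn) ?_ ?_).symm
    · intro s hs _
      rw [setIntegral_const q, setIntegral_indicator hA, setIntegral_const (1:ℝ), measureReal_def, measureReal_def,
        key' q hq.1 hq.2 s hs, smul_eq_mul, smul_eq_mul, mul_one, ENNReal.toReal_mul,
        ENNReal.toReal_ofReal hq.1.le]
      ring
    · exact stronglyMeasurable_const.aestronglyMeasurable
  · -- uniform distribution
    intro q hq
    rw [part2' q hq.1 hq.2, ENNReal.toReal_ofReal hq.1.le]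
  · -- independence
    have hcle : MeasurableSpace.comap (fun ω => F (τ ω) ω) inferInstance ≤ mΩ := hXm.comap_le
    have hIndepSets : IndepSets ((fun t => (fun ω => F (τ ω) ω) ⁻¹' t) '' Set.range Set.Iic)
        {s | MeasurableSet[𝒢] s} μ := by
      rw [ProbabilityTheory.IndepSets_iff]
      rintro s t ⟨s', ⟨a, rfl⟩, rfl⟩ ht
      have hpre : (fun t => (fun ω => F (τ ω) ω) ⁻¹' t) (Set.Iic a) = {ω | F (τ ω) ω ≤ a} := rfl
      rw [hpre]
      rcases le_or_gt a 0 with ha0 | ha0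
      · have hs0 : μ {ω | F (τ ω) ω ≤ a} = 0 := by
          have hb : ∀ m : ℕ, μ {ω | F (τ ω) ω ≤ a} ≤ ENNReal.ofReal (1/((m:ℝ)+2)) := by
            intro m
            have h2 : (0:ℝ) < 1/((m:ℝ)+2) := by positivity
            have h3 : 1/((m:ℝ)+2) < 1 := by
              rw [div_lt_one (by positivity)]
              have : (0:ℝ) ≤ (m:ℝ) := Nat.cast_nonneg m
              linarith
            rw [← part2' (1/((m:ℝ)+2)) h2 h3]
            exact measure_mono fun ω hω => le_trans (le_trans hω ha0) h2.le
          have ht0 : Tendsto (fun m : ℕ => ENNReal.ofReal (1/((m:ℝ)+2))) atTop (nhds 0) := by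
            rw [← ENNReal.ofReal_zero]
            exact ENNReal.tendsto_ofReal hseq
          exact le_antisymm (ge_of_tendsto' ht0 hb) (zero_le)
        rw [measure_inter_null_of_null_left t hs0, hs0, zero_mul]
      rcases lt_or_ge a 1 with ha1 | ha1
      · rw [Set.inter_comm, key' a ha0 ha1 t ht, part2' a ha0 ha1]
      · have hs1 : μ {ω | F (τ ω) ω ≤ a} = 1 := by
          refine le_antisymm prob_le_one ?_
          have hb : ∀ m : ℕ, ENNReal.ofReal (1 - 1/((m:ℝ)+2)) ≤ μ {ω | F (τ ω) ω ≤ a} := by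
            intro m
            have h2 : (0:ℝ) < 1/((m:ℝ)+2) := by positivity
            have h3 : 1/((m:ℝ)+2) < 1 := by
              rw [div_lt_one (by positivity)]
              have : (0:ℝ) ≤ (m:ℝ) := Nat.cast_nonneg m
              linarith
            rw [← part2' (1 - 1/((m:ℝ)+2)) (by linarith) (by linarith)]
            refine measure_mono fun ω hω => ?_
            simp only [Set.mem_setOf_eq] at hω ⊢
            linarith
          have ht1 : Tendsto (fun m : ℕ => ENNReal.ofReal (1 - 1/((m:ℝ)+2))) atTop (nhds 1) := by
            have h4 : Tendsto (fun m : ℕ => 1 - 1/((m:ℝ)+2)) atTop (nhds (1 - 0)) :=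
              tendsto_const_nhds.sub hseq
            rw [sub_zero] at h4
            rw [← ENNReal.ofReal_one]
            exact ENNReal.tendsto_ofReal h4
          exact le_of_tendsto ht1 (Eventually.of_forall hb)
        have hAm : MeasurableSet[mΩ] {ω | F (τ ω) ω ≤ a} := measurableSet_le hXm measurable_const
        have hsc : μ {ω | F (τ ω) ω ≤ a}ᶜ = 0 := by
          rw [measure_compl hAm (measure_ne_top μ _), hs1, measure_univ, tsub_self]
        have h1 : μ ({ω | F (τ ω) ω ≤ a} ∩ t) = μ t := by
          refine le_antisymm (measure_mono Set.inter_subset_right) ?_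
          have hsub : t ⊆ ({ω | F (τ ω) ω ≤ a} ∩ t) ∪ ({ω | F (τ ω) ω ≤ a}ᶜ ∩ t) := by
            intro ω hω
            by_cases h : F (τ ω) ω ≤ a
            · exact Or.inl ⟨h, hω⟩
            · exact Or.inr ⟨h, hω⟩
          calc μ t ≤ μ (({ω | F (τ ω) ω ≤ a} ∩ t) ∪ ({ω | F (τ ω) ω ≤ a}ᶜ ∩ t)) :=
                measure_mono hsub
            _ ≤ μ ({ω | F (τ ω) ω ≤ a} ∩ t) + μ ({ω | F (τ ω) ω ≤ a}ᶜ ∩ t) :=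
                measure_union_le _ _
            _ = μ ({ω | F (τ ω) ω ≤ a} ∩ t) := by
                rw [measure_inter_null_of_null_left t hsc, add_zero]
        rw [h1, hs1, one_mul]
    exact ProbabilityTheory.IndepSets.indep
      (p1 := (fun t => (fun ω => F (τ ω) ω) ⁻¹' t) '' Set.range Set.Iic)
      (p2 := {s | MeasurableSet[𝒢] s}) hcle h𝒢 (isPiSystem_Iic.comap _)
      (@MeasurableSpace.isPiSystem_measurableSet Ω 𝒢)
      (by rw [BorelSpace.measurable_eq (α := ℝ), borel_eq_generateFrom_Iic ℝ,
        MeasurableSpace.comap_generateFrom])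
      (@MeasurableSpace.generateFrom_measurableSet Ω 𝒢).symm hIndepSets
end

section
/- Let F and F* be random continuous cdf's defined on a common probability space such that F* is measurable with respect to a sub-σ-algebra 𝒢 and E[F(u) | 𝒢] = F*(u) almost surely for every u ∈ ℝ. Then for every q ∈ (0,1), E[F(F*⁻¹(q))] = q, where F*⁻¹(q) = sup{v : F*(v) ≤ q} is the (𝒢-measurable) generalized inverse of F*. -/
open Filter MeasureTheory Set

/-- If `F` and `F*` are random continuous cdf's, `F*` is `𝒢`-measurable and
`E[F(u) | 𝒢] = F*(u)` a.s. for every `u`, then `E[F(F*⁻¹(q))] = q` for every `q ∈ (0,1)`,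
where `F*⁻¹(q) = sup {v | F*(v) ≤ q}`. -/
theorem stmt_7 {Ω : Type*} (𝒢 : MeasurableSpace Ω) {mΩ : MeasurableSpace Ω} (μ : Measure Ω) [IsProbabilityMeasure μ]
    (h𝒢 : 𝒢 ≤ mΩ)
    (F Fstar : ℝ → Ω → ℝ)
    (hFmeas : Measurable fun p : ℝ × Ω => F p.1 p.2)
    (hFstarMeas : ∀ u : ℝ, Measurable[𝒢] (Fstar u))
    (hFmono : ∀ᵐ ω ∂μ, Monotone fun u => F u ω)
    (hFcont : ∀ᵐ ω ∂μ, Continuous fun u => F u ω)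
    (hFbot : ∀ᵐ ω ∂μ, Tendsto (fun u => F u ω) atBot (nhds 0))
    (hFtop : ∀ᵐ ω ∂μ, Tendsto (fun u => F u ω) atTop (nhds 1))
    (hFsmono : ∀ᵐ ω ∂μ, Monotone fun u => Fstar u ω)
    (hFscont : ∀ᵐ ω ∂μ, Continuous fun u => Fstar u ω)
    (hFsbot : ∀ᵐ ω ∂μ, Tendsto (fun u => Fstar u ω) atBot (nhds 0))
    (hFstop : ∀ᵐ ω ∂μ, Tendsto (fun u => Fstar u ω) atTop (nhds 1))
    (hcond : ∀ u : ℝ, μ[F u | 𝒢] =ᵐ[μ] Fstar u) :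
    ∀ q ∈ Set.Ioo (0 : ℝ) 1,
      ∫ ω, F (sSup {v : ℝ | Fstar v ω ≤ q}) ω ∂μ = q := by
  intro q hq
  obtain ⟨hq0, hq1⟩ := hq
  classical
  letI _inst : MeasurableSpace Ω := mΩ
  set γ : Ω → ℝ := fun ω => sSup {v : ℝ | Fstar v ω ≤ q} with hγdef
  -- a 𝒢-measurable version of γ
  set γE : Ω → EReal := fun ω => ⨅ r : ℚ,
    if q < Fstar (r : ℝ) ω then (((r : ℝ) : EReal)) else ⊤ with hγEdef
  have hγEmeas : Measurable[𝒢] γE := by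
    refine Measurable.iInf fun r => Measurable.ite ?_ measurable_const measurable_const
    exact measurableSet_lt measurable_const (hFstarMeas (r : ℝ))
  set g : Ω → ℝ := fun ω => (γE ω).toReal with hgdef
  have hgmeas𝒢 : Measurable[𝒢] g := measurable_ereal_toReal.comp hγEmeas
  have hgmeas : Measurable[mΩ] g := fun s hs => h𝒢 _ (hgmeas𝒢 hs)
  -- all the a.e. good facts at once
  have key : ∀ᵐ ω ∂μ, Fstar (γ ω) ω = q ∧ g ω = γ ω ∧
      (∀ u, F u ω ∈ Icc (0:ℝ) 1) ∧ (∀ u, Fstar u ω ∈ Icc (0:ℝ) 1) ∧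
      (Continuous fun u => F u ω) ∧ (Continuous fun u => Fstar u ω) := by
    filter_upwards [hFmono, hFcont, hFbot, hFtop, hFsmono, hFscont, hFsbot, hFstop]
      with ω h1 h2 h3 h4 h5 h6 h7 h8
    have hbF : ∀ u, F u ω ∈ Icc (0:ℝ) 1 := by
      intro u
      constructor
      · exact le_of_tendsto h3 (eventually_atBot.2 ⟨u, fun v hv => h1 hv⟩)
      · exact ge_of_tendsto h4 (eventually_atTop.2 ⟨u, fun v hv => h1 hv⟩)
    have hbFs : ∀ u, Fstar u ω ∈ Icc (0:ℝ) 1 := by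
      intro u
      constructor
      · exact le_of_tendsto h7 (eventually_atBot.2 ⟨u, fun v hv => h5 hv⟩)
      · exact ge_of_tendsto h8 (eventually_atTop.2 ⟨u, fun v hv => h5 hv⟩)
    have hSne : {v : ℝ | Fstar v ω ≤ q}.Nonempty := by
      obtain ⟨v, hv⟩ := (h7.eventually_lt_const hq0).exists
      exact ⟨v, le_of_lt hv⟩
    have hSbdd : BddAbove {v : ℝ | Fstar v ω ≤ q} := by
      obtain ⟨M, hM⟩ := eventually_atTop.1 (h8.eventually_const_lt hq1)
      refine ⟨M, fun v hv => ?_⟩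
      by_contra hvM
      exact absurd hv (not_le.2 (hM v (le_of_not_ge hvM)))
    have hSclosed : IsClosed {v : ℝ | Fstar v ω ≤ q} :=
      isClosed_Iic.preimage h6
    have hγmem : Fstar (γ ω) ω ≤ q := hSclosed.csSup_mem hSne hSbdd
    have hγge : q ≤ Fstar (γ ω) ω := by
      have hcont : Tendsto (fun v => Fstar v ω) (nhdsWithin (γ ω) (Ioi (γ ω)))
          (nhds (Fstar (γ ω) ω)) := (h6.tendsto _).mono_left nhdsWithin_le_nhds
      refine ge_of_tendsto hcont ?_
      filter_upwards [self_mem_nhdsWithin] with v hv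
      by_contra hlt
      push_neg at hlt
      exact absurd (le_csSup hSbdd (le_of_lt hlt)) (not_le.2 hv)
    have hγeq : Fstar (γ ω) ω = q := le_antisymm hγmem hγge
    have hchar : ∀ r : ℝ, q < Fstar r ω ↔ γ ω < r := by
      intro r
      constructor
      · intro h
        by_contra hr
        push_neg at hr
        have : Fstar r ω ≤ Fstar (γ ω) ω := h5 hr
        rw [hγeq] at this
        exact absurd h (not_lt.2 this)
      · intro h
        by_contra hr
        push_neg at hr
        exact absurd (le_csSup hSbdd hr) (not_le.2 h)
    have hγE : γE ω = ((γ ω : ℝ) : EReal) := by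
      apply le_antisymm
      · refine forall_gt_iff_le.1 fun c hc => ?_
        obtain ⟨r, hr1, hr2⟩ := EReal.exists_rat_btwn_of_lt hc
        have hqr : q < Fstar (r : ℝ) ω := (hchar (r : ℝ)).2 (EReal.coe_lt_coe_iff.1 hr1)
        calc γE ω ≤ (((r : ℝ) : EReal)) := by
              refine iInf_le_of_le r ?_
              rw [if_pos hqr]
          _ < c := hr2
      · rw [hγEdef]
        refine le_iInf fun r => ?_
        by_cases h : q < Fstar (r : ℝ) ω
        · simp only [if_pos h]
          exact EReal.coe_le_coe_iff.2 (le_of_lt ((hchar (r : ℝ)).1 h))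
        · simp only [if_neg h]
          exact le_top
    have hgγ : g ω = γ ω := by
      rw [hgdef]
      simp only [hγE, EReal.toReal_coe]
    exact ⟨hγeq, hgγ, hbF, hbFs, h2, h6⟩
  -- the dyadic approximations
  set κ : ℕ → Ω → ℤ := fun n ω => ⌈g ω * 2 ^ n⌉ with hκdef
  set γn : ℕ → Ω → ℝ := fun n ω => (κ n ω : ℝ) / 2 ^ n with hγndef
  have hκmeas : ∀ n, Measurable[𝒢] (κ n) := fun n =>
    Int.measurable_ceil.comp (hgmeas𝒢.mul (@measurable_const ℝ Ω _ 𝒢 _))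
  have hγnmeas𝒢 : ∀ n, Measurable[𝒢] (γn n) := fun n =>
    ((measurable_of_countable _).comp (hκmeas n)).div (@measurable_const ℝ Ω _ 𝒢 _)
  have hγnmeas : ∀ n, Measurable[mΩ] (γn n) := fun n s hs => h𝒢 _ (hγnmeas𝒢 n hs)
  -- convergence of γn to g, pointwise
  have hγnconv : ∀ ω, Tendsto (fun n => γn n ω) atTop (nhds (g ω)) := by
    intro ω
    have h2pos : ∀ n : ℕ, (0:ℝ) < 2 ^ n := fun n => by positivity
    have hle : ∀ n, g ω ≤ γn n ω := by
      intro n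
      simp only [hγndef, hκdef]
      rw [le_div_iff₀ (h2pos n)]
      exact Int.le_ceil _
    have hge : ∀ n, γn n ω ≤ g ω + ((2:ℝ) ^ n)⁻¹ := by
      intro n
      simp only [hγndef, hκdef]
      rw [div_le_iff₀ (h2pos n)]
      calc ((⌈g ω * 2 ^ n⌉ : ℝ)) ≤ g ω * 2 ^ n + 1 := (Int.ceil_lt_add_one _).le
        _ = (g ω + ((2:ℝ) ^ n)⁻¹) * 2 ^ n := by field_simp
    have htend : Tendsto (fun n : ℕ => ((2:ℝ) ^ n)⁻¹) atTop (nhds 0) := by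
      have := tendsto_pow_atTop_nhds_zero_of_lt_one
        (by norm_num : (0:ℝ) ≤ 2⁻¹) (by norm_num : (2:ℝ)⁻¹ < 1)
      simpa [inv_pow] using this
    have hupper : Tendsto (fun n => g ω + ((2:ℝ) ^ n)⁻¹) atTop (nhds (g ω)) := by
      simpa using tendsto_const_nhds.add htend
    exact tendsto_of_tendsto_of_tendsto_of_le_of_le tendsto_const_nhds hupper hle hge
  -- measurability of the composed maps
  have hFcompmeas𝒢 : ∀ (h : Ω → ℝ), Measurable[𝒢] h →
      Measurable[mΩ] fun ω => F (h ω) ω := fun h hh =>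
    hFmeas.comp ((hh.mono h𝒢 le_rfl).prodMk (@measurable_id Ω mΩ))
  have hFcompmeas : ∀ (h : Ω → ℝ), Measurable[𝒢] h →
      Measurable[mΩ] fun ω => F (h ω) ω := fun h hh =>
    hFcompmeas𝒢 h hh
  have hFscompmeas : ∀ n, Measurable[𝒢] fun ω => Fstar (γn n ω) ω := by
    intro n
    intro s hs
    have heq : (fun ω => Fstar (γn n ω) ω) ⁻¹' s =
        ⋃ k : ℤ, (κ n ⁻¹' {k} ∩ Fstar ((k : ℝ) / 2 ^ n) ⁻¹' s) := by
      ext ω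
      simp only [mem_preimage, mem_iUnion, mem_inter_iff, mem_singleton_iff]
      constructor
      · intro h
        refine ⟨κ n ω, rfl, ?_⟩
        simpa only [hγndef] using h
      · rintro ⟨k, hk, hmem⟩
        simp only [hγndef, hk]
        exact hmem
    rw [heq]
    exact MeasurableSet.iUnion fun k =>
      ((hκmeas n (measurableSet_singleton k)).inter (hFstarMeas _ hs))
  -- integrability helper
  have hbound : ∀ (h : Ω → ℝ), AEStronglyMeasurable h μ → (∀ᵐ ω ∂μ, ‖h ω‖ ≤ 1) →
      Integrable h μ := fun h hm hb => (integrable_const (1:ℝ)).mono' hm hb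
  have hbF : ∀ᵐ ω ∂μ, ∀ u, F u ω ∈ Icc (0:ℝ) 1 := key.mono fun ω h => h.2.2.1
  have hbFs : ∀ᵐ ω ∂μ, ∀ u, Fstar u ω ∈ Icc (0:ℝ) 1 := key.mono fun ω h => h.2.2.2.1
  have hnormF : ∀ (h : Ω → ℝ), ∀ᵐ ω ∂μ, ‖F (h ω) ω‖ ≤ 1 := by
    intro h
    filter_upwards [hbF] with ω hω
    rw [Real.norm_eq_abs, abs_le]
    exact ⟨le_trans (by norm_num) (hω (h ω)).1, (hω (h ω)).2⟩
  have hnormFs : ∀ (h : Ω → ℝ), ∀ᵐ ω ∂μ, ‖Fstar (h ω) ω‖ ≤ 1 := by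
    intro h
    filter_upwards [hbFs] with ω hω
    rw [Real.norm_eq_abs, abs_le]
    exact ⟨le_trans (by norm_num) (hω (h ω)).1, (hω (h ω)).2⟩
  have hFuint : ∀ u : ℝ, Integrable (F u) μ := by
    intro u
    have hm𝒢 : Measurable[mΩ] (F u) := hFmeas.comp measurable_prodMk_left
    have hm : Measurable[mΩ] (F u) := hm𝒢
    exact hbound _ hm.aestronglyMeasurable (hnormF (fun _ => u))
  haveI : SigmaFinite (μ.trim h𝒢) := by
    haveI : IsFiniteMeasure (μ.trim h𝒢) := isFiniteMeasure_trim h𝒢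
    infer_instance
  -- the key step: per-level identity
  have hstep : ∀ n : ℕ, ∫ ω, F (γn n ω) ω ∂μ = ∫ ω, Fstar (γn n ω) ω ∂μ := by
    intro n
    set A : ℤ → Set Ω := fun k => κ n ⁻¹' {k} with hAdef
    have hA𝒢 : ∀ k, MeasurableSet[𝒢] (A k) := fun k =>
      hκmeas n (measurableSet_singleton k)
    have hAm : ∀ k, MeasurableSet[mΩ] (A k) := fun k => h𝒢 _ (hA𝒢 k)
    have hdisj : Pairwise (Function.onFun Disjoint A) := by
      intro i j hij
      simp only [Function.onFun, hAdef]
      refine Set.disjoint_left.2 fun ω h1 h2 => ?_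
      exact hij ((Set.mem_preimage.1 h1).symm.trans (Set.mem_preimage.1 h2))
    have hU : ⋃ k, A k = univ := by
      ext ω
      simp [hAdef]
    have hFci : Integrable (fun ω => F (γn n ω) ω) μ :=
      hbound _ ((hFcompmeas _ (hγnmeas𝒢 n)).aestronglyMeasurable) (hnormF (γn n))
    have hFsci : Integrable (fun ω => Fstar (γn n ω) ω) μ := by
      have hm : Measurable[mΩ] fun ω => Fstar (γn n ω) ω :=
        fun s hs => h𝒢 _ (hFscompmeas n hs)
      exact hbound _ hm.aestronglyMeasurable (hnormFs (γn n))
    have honA : ∀ k : ℤ, ∀ ω ∈ A k, γn n ω = (k : ℝ) / 2 ^ n := by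
      intro k ω hω
      have hk : κ n ω = k := hω
      simp only [hγndef, hk]
    have hcondset : ∀ (u : ℝ) (k : ℤ),
        ∫ ω in A k, F u ω ∂μ = ∫ ω in A k, Fstar u ω ∂μ := by
      intro u k
      rw [← setIntegral_condExp h𝒢 (hFuint u) (hA𝒢 k)]
      refine setIntegral_congr_ae (hAm k) ?_
      filter_upwards [hcond u] with ω hω _
      exact hω
    calc ∫ ω, F (γn n ω) ω ∂μ = ∫ ω in ⋃ k, A k, F (γn n ω) ω ∂μ := by
          rw [hU, setIntegral_univ]
      _ = ∑' k : ℤ, ∫ ω in A k, F (γn n ω) ω ∂μ :=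
          integral_iUnion hAm hdisj (by rw [hU]; exact hFci.integrableOn)
      _ = ∑' k : ℤ, ∫ ω in A k, Fstar (γn n ω) ω ∂μ := by
          refine tsum_congr fun k => ?_
          have h1 : ∫ ω in A k, F (γn n ω) ω ∂μ = ∫ ω in A k, F ((k:ℝ)/2^n) ω ∂μ :=
            setIntegral_congr_fun (hAm k) fun ω hω => by rw [honA k ω hω]
          have h2 : ∫ ω in A k, Fstar (γn n ω) ω ∂μ
              = ∫ ω in A k, Fstar ((k:ℝ)/2^n) ω ∂μ :=
            setIntegral_congr_fun (hAm k) fun ω hω => by rw [honA k ω hω]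
          rw [h1, h2]
          exact hcondset _ k
      _ = ∫ ω in ⋃ k, A k, Fstar (γn n ω) ω ∂μ :=
          (integral_iUnion hAm hdisj (by rw [hU]; exact hFsci.integrableOn)).symm
      _ = ∫ ω, Fstar (γn n ω) ω ∂μ := by rw [hU, setIntegral_univ]
  -- dominated convergence on both sides
  have hlim1 : Tendsto (fun n => ∫ ω, F (γn n ω) ω ∂μ) atTop
      (nhds (∫ ω, F (g ω) ω ∂μ)) := by
    refine tendsto_integral_of_dominated_convergence (fun _ => (1:ℝ))
      (fun n => (hFcompmeas _ (hγnmeas𝒢 n)).aestronglyMeasurable)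
      (integrable_const 1) (fun n => hnormF (γn n)) ?_
    filter_upwards [key] with ω hω
    exact ((hω.2.2.2.2.1.tendsto (g ω)).comp (hγnconv ω))
  have hlim2 : Tendsto (fun n => ∫ ω, Fstar (γn n ω) ω ∂μ) atTop
      (nhds (∫ ω, Fstar (g ω) ω ∂μ)) := by
    refine tendsto_integral_of_dominated_convergence (fun _ => (1:ℝ))
      (fun n => ?_) (integrable_const 1) (fun n => hnormFs (γn n)) ?_
    · have hm : Measurable[mΩ] fun ω => Fstar (γn n ω) ω :=
        fun s hs => h𝒢 _ (hFscompmeas n hs)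
      exact hm.aestronglyMeasurable
    · filter_upwards [key] with ω hω
      exact ((hω.2.2.2.2.2.tendsto (g ω)).comp (hγnconv ω))
  have heq1 : ∫ ω, F (g ω) ω ∂μ = ∫ ω, Fstar (g ω) ω ∂μ := by
    refine tendsto_nhds_unique ?_ hlim2
    simpa only [hstep] using hlim1
  have heq2 : ∫ ω, Fstar (g ω) ω ∂μ = q := by
    have h : ∫ ω, Fstar (g ω) ω ∂μ = ∫ _ω, q ∂μ := by
      refine integral_congr_ae ?_
      filter_upwards [key] with ω hω
      rw [hω.2.1, hω.1]
    rw [h, integral_const, probReal_univ, smul_eq_mul, one_mul]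
  have heq3 : ∫ ω, F (γ ω) ω ∂μ = ∫ ω, F (g ω) ω ∂μ := by
    refine integral_congr_ae ?_
    filter_upwards [key] with ω hω
    rw [hω.2.1]
  calc ∫ ω, F (γ ω) ω ∂μ = ∫ ω, F (g ω) ω ∂μ := heq3
    _ = ∫ ω, Fstar (g ω) ω ∂μ := heq1
    _ = q := heq2
end

section
/- (Polya's theorem.) Let F_n and F be cumulative distribution functions on ℝ with F continuous. If F_n(x) → F(x) for every x ∈ ℝ, then sup_{x ∈ ℝ} |F_n(x) - F(x)| → 0. -/
open Filter

/-- Polya's theorem: pointwise convergence of cdf's to a continuous cdf is uniform. -/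
theorem stmt_11 (F : ℕ → ℝ → ℝ) (Flim : ℝ → ℝ)
    (hmono : ∀ n, Monotone (F n))
    (hbot : ∀ n, Tendsto (F n) atBot (nhds 0)) (htop : ∀ n, Tendsto (F n) atTop (nhds 1))
    (hmonoL : Monotone Flim) (hcontL : Continuous Flim)
    (hbotL : Tendsto Flim atBot (nhds 0)) (htopL : Tendsto Flim atTop (nhds 1))
    (hpt : ∀ x : ℝ, Tendsto (fun n => F n x) atTop (nhds (Flim x))) :
    TendstoUniformly F Flim atTop := by
  classical
  -- Basic bounds 0 ≤ g ≤ 1 for monotone functions with the right limits.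
  have F0 : ∀ (g : ℝ → ℝ), Monotone g → Tendsto g atBot (nhds 0) → ∀ t, 0 ≤ g t := by
    intro g hg hb t
    exact le_of_tendsto hb (eventually_atBot.2 ⟨t, fun y hy => hg hy⟩)
  have F1 : ∀ (g : ℝ → ℝ), Monotone g → Tendsto g atTop (nhds 1) → ∀ t, g t ≤ 1 := by
    intro g hg ht t
    exact ge_of_tendsto ht (eventually_atTop.2 ⟨t, fun y hy => hg hy⟩)
  -- Flim attains every value in (0,1).
  have hsurj : ∀ c : ℝ, 0 < c → c < 1 → ∃ y, Flim y = c := by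
    intro c hc0 hc1
    obtain ⟨a, ha⟩ := (hbotL.eventually (gt_mem_nhds hc0)).exists
    obtain ⟨b, hb⟩ := (htopL.eventually (lt_mem_nhds hc1)).exists
    have hab : a ≤ b := by
      by_contra h
      push_neg at h
      have := hmonoL h.le
      linarith
    obtain ⟨y, _, hy⟩ := intermediate_value_Icc hab hcontL.continuousOn ⟨ha.le, hb.le⟩
    exact ⟨y, hy⟩
  rw [Metric.tendstoUniformly_iff]
  intro ε hε
  set ε3 : ℝ := ε / 3 with hε3def
  have hε3 : 0 < ε3 := by positivity
  obtain ⟨m, hm⟩ := exists_nat_one_div_lt hε3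
  set K : ℕ := m + 1 with hKdef
  have hK1 : 1 ≤ K := by omega
  have Kpos : (0:ℝ) < (K:ℝ) := by positivity
  have Kne : (K:ℝ) ≠ 0 := ne_of_gt Kpos
  have hK : 1 / (K:ℝ) < ε3 := by
    have : ((m:ℝ) + 1) = (K:ℝ) := by push_cast [hKdef]; ring
    rwa [this] at hm
  -- choose points x i with Flim (x i) = i / K for i ∈ [1, K-1]
  have hxe : ∀ i : ℕ, ∃ y : ℝ, i ∈ Finset.Icc 1 (K-1) → Flim y = (i:ℝ)/(K:ℝ) := by
    intro i
    by_cases hi : i ∈ Finset.Icc 1 (K-1)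
    · rw [Finset.mem_Icc] at hi
      have hiK : i < K := by omega
      have h0 : 0 < (i:ℝ)/(K:ℝ) := by
        apply div_pos _ Kpos
        exact_mod_cast Nat.lt_of_lt_of_le Nat.zero_lt_one hi.1
      have h1 : (i:ℝ)/(K:ℝ) < 1 := by
        rw [div_lt_one Kpos]
        exact_mod_cast hiK
      obtain ⟨y, hy⟩ := hsurj _ h0 h1
      exact ⟨y, fun _ => hy⟩
    · exact ⟨0, fun h => absurd h hi⟩
  choose x hx using hxe
  -- eventual closeness at the finitely many points
  have hev : ∀ᶠ n in atTop, ∀ i ∈ Finset.Icc 1 (K-1), |F n (x i) - Flim (x i)| < ε3 := by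
    rw [Filter.eventually_all_finset]
    intro i _
    have h := Metric.tendsto_atTop.mp (hpt (x i)) ε3 hε3
    obtain ⟨N, hN⟩ := h
    refine eventually_atTop.2 ⟨N, fun n hn => ?_⟩
    have := hN n hn
    rwa [Real.dist_eq] at this
  filter_upwards [hev] with n hn t
  rw [Real.dist_eq, abs_sub_lt_iff]
  have hFn0 : 0 ≤ F n t := F0 (F n) (hmono n) (hbot n) t
  have hFn1 : F n t ≤ 1 := F1 (F n) (hmono n) (htop n) t
  have hL0 : 0 ≤ Flim t := F0 Flim hmonoL hbotL t
  have hL1 : Flim t ≤ 1 := F1 Flim hmonoL htopL t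
  constructor
  · -- Flim t - F n t < ε
    by_cases hc : ∃ i ∈ Finset.Icc 1 (K-1), x i ≤ t
    · set S := (Finset.Icc 1 (K-1)).filter (fun i => x i ≤ t) with hSdef
      have hSne : S.Nonempty := by
        obtain ⟨i, hi, hti⟩ := hc
        exact ⟨i, Finset.mem_filter.2 ⟨hi, hti⟩⟩
      set j := S.max' hSne with hjdef
      have hjS := S.max'_mem hSne
      rw [Finset.mem_filter] at hjS
      obtain ⟨hjI, hjt⟩ := hjS
      obtain ⟨hj1, hj2⟩ := Finset.mem_Icc.1 hjI
      have hFnj : F n (x j) ≤ F n t := hmono n hjt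
      have hclose := hn j hjI
      have hxv : Flim (x j) = (j:ℝ)/(K:ℝ) := hx j hjI
      rw [hxv] at hclose
      have hclose' := abs_lt.1 hclose
      have hup : Flim t ≤ ((j:ℝ)+1)/(K:ℝ) := by
        rcases eq_or_lt_of_le hj2 with h1 | h2
        · -- j = K - 1
          have hc1 : (j:ℝ) + 1 = (K:ℝ) := by
            have : j + 1 = K := by omega
            exact_mod_cast this
          rw [hc1, div_self Kne]
          exact hL1
        · -- j < K - 1
          have hmem : j + 1 ∈ Finset.Icc 1 (K-1) := Finset.mem_Icc.2 ⟨by omega, by omega⟩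
          have hnot : j + 1 ∉ S := by
            intro h
            have := S.le_max' _ h
            omega
          have hxt : t < x (j+1) := by
            by_contra h
            push_neg at h
            exact hnot (Finset.mem_filter.2 ⟨hmem, h⟩)
          have hmt := hmonoL hxt.le
          rw [hx _ hmem] at hmt
          have : ((j+1 : ℕ) : ℝ) = (j:ℝ) + 1 := by push_cast; ring
          rwa [this] at hmt
      have hdiff : ((j:ℝ)+1)/(K:ℝ) - (j:ℝ)/(K:ℝ) = 1/(K:ℝ) := by ring
      linarith
    · push_neg at hc
      have hup : Flim t ≤ 1/(K:ℝ) := by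
        rcases Nat.lt_or_ge K 2 with h | h
        · have hK1' : K = 1 := by omega
          have : (K:ℝ) = 1 := by rw [hK1']; norm_num
          rw [this]
          simpa using hL1
        · have hmem : 1 ∈ Finset.Icc 1 (K-1) := Finset.mem_Icc.2 ⟨le_rfl, by omega⟩
          have := hmonoL (hc 1 hmem).le
          rw [hx _ hmem] at this
          simpa using this
      linarith
  · -- F n t - Flim t < ε
    by_cases hc : ∃ i ∈ Finset.Icc 1 (K-1), t < x i
    · set S := (Finset.Icc 1 (K-1)).filter (fun i => t < x i) with hSdef
      have hSne : S.Nonempty := by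
        obtain ⟨i, hi, hti⟩ := hc
        exact ⟨i, Finset.mem_filter.2 ⟨hi, hti⟩⟩
      set j := S.min' hSne with hjdef
      have hjS := S.min'_mem hSne
      rw [Finset.mem_filter] at hjS
      obtain ⟨hjI, hjt⟩ := hjS
      obtain ⟨hj1, hj2⟩ := Finset.mem_Icc.1 hjI
      have hFnj : F n t ≤ F n (x j) := hmono n hjt.le
      have hclose := hn j hjI
      have hxv : Flim (x j) = (j:ℝ)/(K:ℝ) := hx j hjI
      rw [hxv] at hclose
      have hclose' := abs_lt.1 hclose
      have hlow : ((j:ℝ)-1)/(K:ℝ) ≤ Flim t := by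
        rcases eq_or_lt_of_le hj1 with h1 | h2
        · have : (j:ℝ) - 1 = 0 := by
            have : j = 1 := h1.symm
            rw [this]; norm_num
          rw [this, zero_div]
          exact hL0
        · have hmem : j - 1 ∈ Finset.Icc 1 (K-1) := Finset.mem_Icc.2 ⟨by omega, by omega⟩
          have hnot : j - 1 ∉ S := by
            intro h
            have := S.min'_le _ h
            omega
          have hxt : x (j-1) ≤ t := by
            by_contra h
            push_neg at h
            exact hnot (Finset.mem_filter.2 ⟨hmem, h⟩)
          have hmt := hmonoL hxt
          rw [hx _ hmem] at hmt
          have : ((j-1 : ℕ) : ℝ) = (j:ℝ) - 1 := by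
            rw [Nat.cast_sub hj1]; norm_num
            exact hjdef.symm
          rwa [this] at hmt
      have hdiff : (j:ℝ)/(K:ℝ) - ((j:ℝ)-1)/(K:ℝ) = 1/(K:ℝ) := by ring
      linarith
    · push_neg at hc
      have hlow : 1 - 1/(K:ℝ) ≤ Flim t := by
        rcases Nat.lt_or_ge K 2 with h | h
        · have hK1' : K = 1 := by omega
          have : (K:ℝ) = 1 := by rw [hK1']; norm_num
          rw [this]
          simpa using hL0
        · have hmem : K - 1 ∈ Finset.Icc 1 (K-1) := Finset.mem_Icc.2 ⟨by omega, le_rfl⟩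
          have hmt := hmonoL (hc _ hmem)
          rw [hx _ hmem] at hmt
          have hcast : ((K-1 : ℕ) : ℝ) = (K:ℝ) - 1 := by
            rw [Nat.cast_sub hK1]; norm_num
          rw [hcast] at hmt
          have : ((K:ℝ) - 1)/(K:ℝ) = 1 - 1/(K:ℝ) := by field_simp
          linarith [this ▸ hmt]
      linarith
end

section
/- Let F* be a random element of the space of continuous cdf's on ℝ, measurable with respect to a σ-algebra generated by a random element X, and let τ be a real random variable on the same probability space with conditional cdf F(u) := P(τ ≤ u | X). Then for every q ∈ (0,1), P(F*(τ) ≤ q | X) = F(F*⁻¹(q)) almost surely, and hence P(F*(τ) ≤ q) = E[F(F*⁻¹(q))], where F*⁻¹(q) = sup{v : F*(v) ≤ q}. -/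
open Filter MeasureTheory Set
open scoped Topology

/-- If `F*` is a random continuous cdf measurable w.r.t. `σ(X)` and `τ` has conditional cdf
`F(u) = P(τ ≤ u | X)`, then `P(F*(τ) ≤ q | X) = F(F*⁻¹(q))` a.s. and hence
`P(F*(τ) ≤ q) = E[F(F*⁻¹(q))]`, for every `q ∈ (0,1)`,
where `F*⁻¹(q) = sup {v | F*(v) ≤ q}`. -/
theorem stmt_17 {Ω E : Type*} {mΩ : MeasurableSpace Ω} [MeasurableSpace E]
    (μ : Measure Ω) [IsProbabilityMeasure μ]
    (X : Ω → E) (hX : Measurable X)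
    (τ : Ω → ℝ) (hτ : Measurable τ)
    (Fstar : ℝ → Ω → ℝ)
    (hFsMeas : ∀ u : ℝ, Measurable[MeasurableSpace.comap X inferInstance] (Fstar u))
    (hFsmono : ∀ᵐ ω ∂μ, Monotone fun u => Fstar u ω)
    (hFscont : ∀ᵐ ω ∂μ, Continuous fun u => Fstar u ω)
    (hFsbot : ∀ᵐ ω ∂μ, Tendsto (fun u => Fstar u ω) atBot (nhds 0))
    (hFstop : ∀ᵐ ω ∂μ, Tendsto (fun u => Fstar u ω) atTop (nhds 1))
    (F : ℝ → Ω → ℝ)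
    (hFmeas : Measurable fun p : ℝ × Ω => F p.1 p.2)
    (hFmono : ∀ᵐ ω ∂μ, Monotone fun u => F u ω)
    (hFcont : ∀ᵐ ω ∂μ, Continuous fun u => F u ω)
    (hFcond : ∀ u : ℝ,
      F u =ᵐ[μ] μ[Set.indicator {ω | τ ω ≤ u} (fun _ => (1 : ℝ)) |
        MeasurableSpace.comap X inferInstance]) :
    ∀ q ∈ Set.Ioo (0 : ℝ) 1,
      (μ[Set.indicator {ω | Fstar (τ ω) ω ≤ q} (fun _ => (1 : ℝ)) |
            MeasurableSpace.comap X inferInstance]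
          =ᵐ[μ] fun ω => F (sSup {v : ℝ | Fstar v ω ≤ q}) ω) ∧
      (μ {ω | Fstar (τ ω) ω ≤ q}).toReal
          = ∫ ω, F (sSup {v : ℝ | Fstar v ω ≤ q}) ω ∂μ := by
  classical
  intro q hq
  have hm : MeasurableSpace.comap X inferInstance ≤ mΩ := hX.comap_le
  -- choose measurable sets in `E` representing the `σ(X)`-measurable events `{Fstar s ≤ q}`
  have hB : ∀ s : ℚ, ∃ B : Set E, MeasurableSet B ∧
      X ⁻¹' B = {ω | Fstar (s : ℝ) ω ≤ q} :=
    fun s => MeasurableSpace.measurableSet_comap.mp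
      (hFsMeas (s : ℝ) (measurableSet_Iic : MeasurableSet (Iic q)))
  choose B hBmeas hBeq using hB
  -- measurable version of the generalized inverse, as a function of `X`
  set γ : E → ℝ := fun x => (⨆ s : ℚ, if x ∈ B s then ((s : ℝ) : EReal) else ⊥).toReal with hγ
  have hγmeas : Measurable γ := by
    apply Measurable.ereal_toReal
    exact Measurable.iSup fun s => Measurable.ite (hBmeas s) measurable_const measurable_const
  -- the good event
  have hGood : ∀ᵐ ω ∂μ,
      (∀ v : ℝ, Fstar v ω ≤ q ↔ v ≤ sSup {v : ℝ | Fstar v ω ≤ q}) ∧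
      γ (X ω) = sSup {v : ℝ | Fstar v ω ≤ q} := by
    filter_upwards [hFsmono, hFscont, hFsbot, hFstop] with ω hmono hcont hbot htop
    set S : Set ℝ := {v | Fstar v ω ≤ q} with hS
    have hne : S.Nonempty := by
      obtain ⟨v, hv⟩ := (hbot.eventually_lt_const hq.1).exists
      exact ⟨v, hv.le⟩
    have hbdd : BddAbove S := by
      obtain ⟨r, hr⟩ := (eventually_atTop).1 (htop.eventually_const_lt hq.2)
      refine ⟨r, fun v hv => ?_⟩
      by_contra h
      exact absurd hv (not_le.2 (hr v (le_of_not_ge h)))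
    have hclosed : IsClosed S := isClosed_Iic.preimage hcont
    have hmem : sSup S ∈ S := hclosed.csSup_mem hne hbdd
    have hiff : ∀ v : ℝ, Fstar v ω ≤ q ↔ v ≤ sSup S := fun v =>
      ⟨fun h => le_csSup hbdd h, fun h => le_trans (hmono h) hmem⟩
    refine ⟨hiff, ?_⟩
    have hBs : ∀ s : ℚ, X ω ∈ B s ↔ (s : ℝ) ≤ sSup S := by
      intro s
      rw [← hiff]
      constructor
      · intro h
        have : ω ∈ X ⁻¹' B s := h
        rw [hBeq s] at this; exact this
      · intro h
        have : ω ∈ X ⁻¹' B s := by rw [hBeq s]; exact h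
        exact this
    have hsup : (⨆ s : ℚ, if X ω ∈ B s then ((s : ℝ) : EReal) else ⊥)
        = ((sSup S : ℝ) : EReal) := by
      apply le_antisymm
      · apply iSup_le
        intro s
        by_cases h : X ω ∈ B s
        · simp only [h, if_true]
          exact_mod_cast (hBs s).1 h
        · simp [h]
      · refine le_of_forall_lt fun c hc => ?_
        induction c using EReal.rec with
        | bot =>
          obtain ⟨s, hs⟩ := exists_rat_lt (sSup S)
          have hmem' : X ω ∈ B s := (hBs s).2 hs.le
          refine lt_of_lt_of_le ?_
            (le_iSup (fun s : ℚ => if X ω ∈ B s then ((s : ℝ) : EReal) else ⊥) s)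
          simp [hmem']
        | coe x =>
          have hx : x < sSup S := by exact_mod_cast hc
          obtain ⟨s, hs1, hs2⟩ := exists_rat_btwn hx
          have hmem' : X ω ∈ B s := (hBs s).2 hs2.le
          refine lt_of_lt_of_le ?_
            (le_iSup (fun s : ℚ => if X ω ∈ B s then ((s : ℝ) : EReal) else ⊥) s)
          simp only [hmem', if_true]
          exact_mod_cast hs1
        | top => exact absurd (hc.trans (EReal.coe_lt_top _)) (lt_irrefl ⊤)
    rw [hγ]
    simp only [hsup, EReal.toReal_coe]
  -- the conditional distribution kernel of τ given X
  set κ := ProbabilityTheory.condDistrib τ X μ with hκ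
  -- identification of F with the cdf of the kernel, first at rationals, then everywhere
  have hQ : ∀ᵐ ω ∂μ, ∀ s : ℚ, F (s : ℝ) ω = ProbabilityTheory.cdf (κ (X ω)) (s : ℝ) := by
    rw [ae_all_iff]
    intro s
    filter_upwards [hFcond (s : ℝ),
      ProbabilityTheory.condDistrib_ae_eq_condExp hX hτ
        (measurableSet_Iic : MeasurableSet (Iic (s : ℝ)))] with ω h1 h2
    rw [h1, ProbabilityTheory.cdf_eq_real]
    exact h2.symm
  have hFeq : ∀ᵐ ω ∂μ, ∀ u : ℝ, F u ω = ProbabilityTheory.cdf (κ (X ω)) u := by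
    filter_upwards [hQ, hFcont] with ω hQω hcont
    intro u
    have hseq : ∀ n : ℕ, ∃ s : ℚ, u < (s : ℝ) ∧ (s : ℝ) < u + 1 / (n + 1) := by
      intro n
      have h : u < u + 1 / (n + 1 : ℝ) := by
        have : (0 : ℝ) < 1 / (n + 1 : ℝ) := by positivity
        linarith
      obtain ⟨s, h1, h2⟩ := exists_rat_btwn h
      exact ⟨s, h1, h2⟩
    choose s hs1 hs2 using hseq
    have hlim : Tendsto (fun n : ℕ => ((s n : ℝ))) atTop (nhds u) := by
      have h1 : Tendsto (fun n : ℕ => u + 1 / (n + 1 : ℝ)) atTop (nhds u) := by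
        simpa using (tendsto_const_nhds : Tendsto (fun _ : ℕ => u) atTop (nhds u)).add tendsto_one_div_add_atTop_nhds_zero_nat
      exact tendsto_of_tendsto_of_tendsto_of_le_of_le tendsto_const_nhds h1
        (fun n => (hs1 n).le) (fun n => (hs2 n).le)
    have hF : Tendsto (fun n : ℕ => F ((s n : ℝ)) ω) atTop (nhds (F u ω)) :=
      (hcont.tendsto u).comp hlim
    have hright : Tendsto (fun n : ℕ => ProbabilityTheory.cdf (κ (X ω)) ((s n : ℝ))) atTop
        (nhds (ProbabilityTheory.cdf (κ (X ω)) u)) := by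
      refine ((ProbabilityTheory.cdf (κ (X ω))).right_continuous u).tendsto.comp ?_
      exact tendsto_nhdsWithin_of_tendsto_nhds_of_eventually_within _ hlim
        (Eventually.of_forall fun n => (hs1 n).le)
    have hF' : Tendsto (fun n : ℕ => ProbabilityTheory.cdf (κ (X ω)) ((s n : ℝ))) atTop
        (nhds (F u ω)) := hF.congr fun n => hQω (s n)
    exact tendsto_nhds_unique hF' hright
  -- the freezing lemma
  set f : E × ℝ → ℝ := Set.indicator {p : E × ℝ | p.2 ≤ γ p.1} (fun _ => 1) with hf_def
  have hset : MeasurableSet {p : E × ℝ | p.2 ≤ γ p.1} :=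
    measurableSet_le measurable_snd (hγmeas.comp measurable_fst)
  have hf_sm : StronglyMeasurable f := (measurable_const.indicator hset).stronglyMeasurable
  have hfXτ : (fun a => f (X a, τ a))
      = Set.indicator {a | τ a ≤ γ (X a)} (fun _ => (1 : ℝ)) := by
    funext a
    simp only [hf_def, Set.indicator_apply, Set.mem_setOf_eq]
  have hBmeas' : MeasurableSet {a | τ a ≤ γ (X a)} := measurableSet_le hτ (hγmeas.comp hX)
  have hf_int : Integrable (fun a => f (X a, τ a)) μ := by
    rw [hfXτ]
    exact (integrable_const (1 : ℝ)).indicator hBmeas'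
  have hfreeze := ProbabilityTheory.condExp_prod_ae_eq_integral_condDistrib hX
    hτ.aemeasurable hf_sm hf_int
  have hRHS : ∀ a : Ω, (∫ y, f (X a, y) ∂(κ (X a)))
      = ProbabilityTheory.cdf (κ (X a)) (γ (X a)) := by
    intro a
    have hfy : (fun y => f (X a, y)) = Set.indicator (Iic (γ (X a))) (fun _ => (1 : ℝ)) := by
      funext y
      simp only [hf_def, Set.indicator_apply, Set.mem_setOf_eq, Set.mem_Iic]
    rw [hfy, ProbabilityTheory.cdf_eq_real]
    exact integral_indicator_one measurableSet_Iic
  -- indicator of the target event agrees a.e. with the frozen indicator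
  have hind : (Set.indicator {ω | Fstar (τ ω) ω ≤ q} (fun _ => (1 : ℝ)))
      =ᵐ[μ] fun a => f (X a, τ a) := by
    filter_upwards [hGood] with ω hω
    have hf1 : f (X ω, τ ω) = if τ ω ≤ γ (X ω) then (1 : ℝ) else 0 := by
      simp [hf_def, Set.indicator_apply]
    have hiff : Fstar (τ ω) ω ≤ q ↔ τ ω ≤ γ (X ω) := by
      rw [hω.1 (τ ω), hω.2]
    rw [hf1]
    simp only [Set.indicator_apply, Set.mem_setOf_eq, hiff]
  -- conclusion of the conditional part
  have hmain : μ[Set.indicator {ω | Fstar (τ ω) ω ≤ q} (fun _ => (1 : ℝ)) |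
        MeasurableSpace.comap X inferInstance]
      =ᵐ[μ] fun ω => F (sSup {v : ℝ | Fstar v ω ≤ q}) ω := by
    refine ((condExp_congr_ae hind).trans hfreeze).trans ?_
    filter_upwards [hFeq, hGood] with ω hFω hω
    rw [hRHS ω, ← hFω (γ (X ω)), hω.2]
  refine ⟨hmain, ?_⟩
  -- the unconditional part
  have hAB : {ω | Fstar (τ ω) ω ≤ q} =ᵐ[μ] {a | τ a ≤ γ (X a)} := by
    rw [Filter.eventuallyEq_set]
    filter_upwards [hGood] with ω hω
    show Fstar (τ ω) ω ≤ q ↔ τ ω ≤ γ (X ω)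
    rw [hω.1 (τ ω), hω.2]
  have hμAB : μ {ω | Fstar (τ ω) ω ≤ q} = μ {a | τ a ≤ γ (X a)} := measure_congr hAB
  have h1 : ∫ ω, F (sSup {v : ℝ | Fstar v ω ≤ q}) ω ∂μ
      = ∫ ω, (μ[fun a => f (X a, τ a) | MeasurableSpace.comap X inferInstance]) ω ∂μ := by
    refine (integral_congr_ae (hfreeze.trans ?_)).symm
    filter_upwards [hFeq, hGood] with ω hFω hω
    rw [hRHS ω, ← hFω (γ (X ω)), hω.2]
  have h2 : ∫ ω, (μ[fun a => f (X a, τ a) | MeasurableSpace.comap X inferInstance]) ω ∂μ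
      = ∫ a, f (X a, τ a) ∂μ := integral_condExp hm
  have h3 : ∫ a, f (X a, τ a) ∂μ = (μ {a | τ a ≤ γ (X a)}).toReal := by
    rw [hfXτ]
    exact (integral_indicator_one (μ := μ) hBmeas').trans (measureReal_def _ _)
  rw [hμAB, ← h3, ← h2, h1]
end
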